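/- Let f ∈ 𝔽₂[a₂,a₆]. If χ(f) equals the image of f under the canonical inclusion 𝔽₂[a₂,a₆] → 𝔽₂[a₂,a₆][s,t], then f is a constant, i.e. f ∈ 𝔽₂. In other words, the invariants of the reduced Hopf algebroid (D̄,Σ̄) = (𝔽₂[a₂,a₆], D̄[s,t]) with trivial coefficients are exactly 𝔽₂. -/

import Mathlib

/-!
Specialise `Σ̄ = D̄[s, t]` back to `D̄` by sending every coefficient to its constant term and
`s, t` to `a₂, a₆`. This kills the `a`'s coming from `χ(a₂) = a₂ + s²`, `χ(a₆) = a₆ + t²`, so it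
turns `χ f` into `f(a₂², a₆²) = f²` (Frobenius over `𝔽₂`) and `C f` into the constant term `c`
of `f`. Hence an invariant `f` satisfies `f² = c = c²`, and `f = c` because Frobenius is
injective on the reduced ring `D̄`.
-/

open MvPolynomial

noncomputable section

/-- `D̄ = 𝔽₂[a₂, a₆]`, with variables indexed `0 ↦ a₂, 1 ↦ a₆`. -/
abbrev Dbar : Type := MvPolynomial (Fin 2) (ZMod 2)

/-- `Σ̄ = D̄[s, t]`, with `0 ↦ s` and `1 ↦ t`. -/
abbrev Sbar : Type := MvPolynomial (Fin 2) Dbar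

def a2 : Dbar := X 0
def a6 : Dbar := X 1

def s : Sbar := X 0
def t : Sbar := X 1

/-- The right unit of the reduced Hopf algebroid `(D̄, Σ̄) = (𝔽₂[a₂, a₆], D̄[s, t])`:
`a₂ ↦ a₂ + s²`, `a₆ ↦ a₆ + t²`. -/
def χ : Dbar →+* Sbar :=
  (aeval ![C a2 + s ^ 2, C a6 + t ^ 2] : Dbar →ₐ[ZMod 2] Sbar).toRingHom

namespace MvPolynomial

variable {σ R : Type*} [CommSemiring R]

def specializeConstantCoeff : MvPolynomial σ (MvPolynomial σ R) →+* MvPolynomial σ R :=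
  eval₂Hom (C.comp constantCoeff) X

@[simp]
lemma specializeConstantCoeff_C (f : MvPolynomial σ R) :
    specializeConstantCoeff (C f) = C (constantCoeff f) :=
  eval₂Hom_C _ _ _

@[simp]
lemma specializeConstantCoeff_X (i : σ) :
    specializeConstantCoeff (X i : MvPolynomial σ (MvPolynomial σ R)) = X i :=
  eval₂Hom_X' _ _ _

lemma specializeConstantCoeff_aeval_C_X_add_X_pow (p : ℕ) (f : MvPolynomial σ R) :
    specializeConstantCoeff
        (aeval (fun i : σ => C (X i) + (X i : MvPolynomial σ (MvPolynomial σ R)) ^ p) f) =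
      expand p f := by
  have : specializeConstantCoeff.comp
      (aeval fun i : σ => C (X i) + (X i : MvPolynomial σ (MvPolynomial σ R)) ^ p).toRingHom =
      (expand p : MvPolynomial σ R →ₐ[R] MvPolynomial σ R).toRingHom := by
    ext i <;> simp
  exact DFunLike.congr_fun this f

theorem eq_C_constantCoeff_of_aeval_C_X_add_X_pow_eq_C (p : ℕ) [Fact p.Prime]
    (f : MvPolynomial σ (ZMod p))
    (h : aeval (fun i : σ => C (X i) + (X i : MvPolynomial σ (MvPolynomial σ (ZMod p))) ^ p) f
      = C f) :
    f = C (constantCoeff f) := by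
  have hpow : f ^ p = C (constantCoeff f) ^ p := by
    calc f ^ p = specializeConstantCoeff (aeval (fun i : σ => C (X i) + X i ^ p) f) := by
          rw [specializeConstantCoeff_aeval_C_X_add_X_pow, expand_zmod]
      _ = C (constantCoeff f) := by rw [h, specializeConstantCoeff_C]
      _ = C (constantCoeff f) ^ p := by rw [← C_pow, ZMod.pow_card]
  exact frobenius_inj (MvPolynomial σ (ZMod p)) p hpow

end MvPolynomial

lemma χ_apply (f : Dbar) : χ f = aeval (fun i : Fin 2 => C (X i) + (X i : Sbar) ^ 2) f := by
  have hvals : ![C a2 + s ^ 2, C a6 + t ^ 2] = fun i : Fin 2 => C (X i) + (X i : Sbar) ^ 2 := by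
    ext i : 1
    fin_cases i <;> rfl
  rw [χ, hvals]
  rfl

/-- The invariants of the reduced Hopf algebroid `(D̄, Σ̄)` are exactly the constants `𝔽₂`:
if `χ(f)` equals the image of `f` under the canonical inclusion, then `f` is constant. -/
theorem invariant_imp_constant (f : Dbar) (h : χ f = C f) :
    ∃ c : ZMod 2, f = C c := by
  rw [χ_apply] at h
  exact ⟨_, eq_C_constantCoeff_of_aeval_C_X_add_X_pow_eq_C 2 f h⟩
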